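/- arXiv:1807.04252 — 6 statements merged into one kernel-verified Lean document; each statement's English description precedes it below -/
import Mathlib

section
/- If σ is a real number with |σ| ≤ 1/2 and σ ≠ 0, and λ ∈ ℂ satisfies λ = (1 + 2iσ ± √(1 - 4σ²))/2 (either sign), then |λ|² = (1 ± √(1-4σ²))/2 < 1. -/
/-
The root is `λ = x + iσ` with `x = (1 + a)/2`, `a = ±√(1 - 4σ²)`, so `a² + 4σ² = 1` and
`|λ|² = x² + σ² = (1 + 2a + a² + 4σ²)/4 = (1 + a)/2`. Since `σ ≠ 0`, `a² < 1`, hence `a < 1`.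
-/

lemma Complex.sq_norm_one_add_mul_I_add_div_two {a σ : ℝ} (h : a ^ 2 + 4 * σ ^ 2 = 1) :
    ‖(1 + 2 * σ * Complex.I + a) / 2‖ ^ 2 = (1 + a) / 2 := by
  have hlam : (1 + 2 * σ * Complex.I + a) / 2 = ⟨(1 + a) / 2, σ⟩ := by
    apply Complex.ext <;> simp
  rw [hlam, Complex.sq_norm, Complex.normSq_mk]
  linear_combination h / 4

lemma sq_sign_mul_sqrt_one_sub_add {σ ε : ℝ} (hσ : |σ| ≤ 1 / 2) (hε : ε = 1 ∨ ε = -1) :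
    (ε * √(1 - 4 * σ ^ 2)) ^ 2 + 4 * σ ^ 2 = 1 := by
  have h4 : 4 * σ ^ 2 ≤ 1 := by
    nlinarith [sq_abs σ, abs_nonneg σ]
  have hε2 : ε ^ 2 = 1 := by rcases hε with rfl | rfl <;> norm_num
  rw [mul_pow, hε2, Real.sq_sqrt (by linarith)]
  ring

lemma lt_one_of_sq_add_four_mul_sq_eq_one {a σ : ℝ} (h : a ^ 2 + 4 * σ ^ 2 = 1) (hσ : σ ≠ 0) :
    a < 1 := by
  nlinarith [sq_pos_of_ne_zero hσ]

theorem stmt_1 (σ : ℝ) (hσ : |σ| ≤ 1/2) (hσ0 : σ ≠ 0) (ε : ℝ) (hε : ε = 1 ∨ ε = -1)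
    (lam : ℂ)
    (hlam : lam = (1 + 2 * σ * Complex.I + ε * Real.sqrt (1 - 4 * σ^2)) / 2) :
    ‖lam‖ ^ 2 = (1 + ε * Real.sqrt (1 - 4 * σ^2)) / 2 ∧
    ‖lam‖ ^ 2 < 1 := by
  have hcircle := sq_sign_mul_sqrt_one_sub_add hσ hε
  have hnorm : ‖lam‖ ^ 2 = (1 + ε * √(1 - 4 * σ ^ 2)) / 2 := by
    rw [hlam, ← Complex.ofReal_mul]
    exact Complex.sq_norm_one_add_mul_I_add_div_two hcircle
  refine ⟨hnorm, ?_⟩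
  have := lt_one_of_sq_add_four_mul_sq_eq_one hcircle hσ0
  linarith
end

section
/- Let λ ∈ ℂ with λ ≠ 1/2 and suppose λ(λ-1)/(2λ-1) = iσ for some nonzero real σ with |σ| ≤ 1/2. Then |λ| < 1. -/
/-!
Clearing the denominator, `λ = x + iy` solves `λ(λ - 1) = iσ(2λ - 1)`, whose imaginary and real parts
read `(2x - 1)(y - σ) = 0` and `x² - x + σ² = (y - σ)²`. When `x = 1/2` the second gives
`(y - σ)² = σ² - 1/4 ≤ 0`, so in every case `y = σ` and then `x² - x + σ² = 0`. Hence
`|λ|² = x² + σ² = x`, while `x(1 - x) = σ² > 0` forces `x < 1`.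
-/

open Complex

lemma mul_sub_one_eq_of_div_eq {lam : ℂ} {σ : ℝ} (hσ0 : σ ≠ 0)
    (heq : lam * (lam - 1) / (2 * lam - 1) = σ * I) :
    lam * (lam - 1) = σ * I * (2 * lam - 1) := by
  have hden : 2 * lam - 1 ≠ 0 := by
    rintro hden
    rw [hden, div_zero, eq_comm, mul_eq_zero] at heq
    simp [hσ0, I_ne_zero] at heq
  rwa [div_eq_iff hden] at heq

lemma re_im_of_mul_sub_one_eq {lam : ℂ} {σ : ℝ} (h : lam * (lam - 1) = σ * I * (2 * lam - 1)) :
    (2 * lam.re - 1) * (lam.im - σ) = 0 ∧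
      lam.re ^ 2 - lam.re + σ ^ 2 = (lam.im - σ) ^ 2 := by
  have him := congrArg im h
  have hre := congrArg re h
  simp only [mul_re, mul_im, sub_re, sub_im, ofReal_re, ofReal_im, I_re, I_im, one_re, one_im,
    re_ofNat, im_ofNat] at him hre
  constructor <;> linarith

lemma im_eq_of_quadratic {x y σ : ℝ} (hσ : σ ^ 2 ≤ 1 / 4) (him : (2 * x - 1) * (y - σ) = 0)
    (hre : x ^ 2 - x + σ ^ 2 = (y - σ) ^ 2) : y = σ := by
  rcases mul_eq_zero.mp him with hx | hy
  · have hx : x = 1 / 2 := by linarith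
    subst hx
    nlinarith [sq_nonneg (y - σ)]
  · linarith

theorem stmt_2_general (lam : ℂ) (σ : ℝ) (hσ0 : σ ≠ 0) (hσ : |σ| ≤ 1/2)
    (heq : lam * (lam - 1) / (2 * lam - 1) = σ * Complex.I) :
    ‖lam‖ < 1 := by
  obtain ⟨him, hre⟩ := re_im_of_mul_sub_one_eq (mul_sub_one_eq_of_div_eq hσ0 heq)
  have hσ2 : σ ^ 2 ≤ 1 / 4 := by nlinarith [sq_abs σ, abs_nonneg σ]
  have hy : lam.im = σ := im_eq_of_quadratic hσ2 him hre
  rw [hy, sub_self] at hre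
  have hnorm : ‖lam‖ ^ 2 = lam.re := by
    rw [Complex.sq_norm, normSq_apply, hy]
    linarith
  have hre_lt : lam.re < 1 := by nlinarith [sq_pos_of_ne_zero hσ0]
  exact (pow_lt_one_iff_of_nonneg (norm_nonneg lam) two_ne_zero).mp (hnorm ▸ hre_lt)

theorem stmt_2 (lam : ℂ) (hlam : lam ≠ 1/2) (σ : ℝ) (hσ0 : σ ≠ 0) (hσ : |σ| ≤ 1/2)
    (heq : lam * (lam - 1) / (2 * lam - 1) = σ * Complex.I) :
    ‖lam‖ < 1 :=
  stmt_2_general lam σ hσ0 hσ heq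
end

section
/- Let A be an n×m real matrix and suppose the min-max problem min_{y∈Δₘ} max_{x∈Δₙ} xᵀAy has a unique saddle point (x*, y*), with value v = x*ᵀAy*. Then for every i with x*ᵢ = 0 one has (Ay*)ᵢ < v, and for every j with y*ⱼ = 0 one has (Aᵀx*)ⱼ > v. -/
/-!
Farkas' lemma, applied to the matrix `A - v` and the vector `-eᵢ`, offers two alternatives.
Either some `y ≥ 0` has `A y ≤ v ∑ y` with slack at least `1` in row `i`: normalised, it is an
optimal strategy of the minimiser with `(A y)ᵢ < v`, hence it is `y*`. Or some `x ≥ 0` with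
`xᵢ > 0` has `xᵀA ≥ v ∑ x`: normalised, it is an optimal strategy of the maximiser, hence it is
`x*`, which is impossible when `x*ᵢ = 0`. The statement about columns is the one about rows for
the game `-Aᵀ`.

Farkas' lemma is Hahn–Banach separation from the cone spanned by the unit vectors and the columns,
once that cone is known to be closed. It is the image of the nonnegative orthant under a linear
map `L`, and is closed by induction on the support: if `L` is injective on the coordinate
subspace, the image is closed; otherwise a kernel vector lets one remove a coordinate
(Carathéodory's argument), which writes the image as a finite union of images with smaller
support.
-/

open Matrix Finset

section ConicImage

variable {ι E : Type*} [Fintype ι]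

lemma exists_nonneg_add_smul_eq_zero {c g : ι → ℝ} (hc : 0 ≤ c) (hg : ∃ t, g t < 0) :
    ∃ τ : ℝ, ∃ u, g u < 0 ∧ 0 ≤ c + τ • g ∧ c u + τ * g u = 0 := by
  classical
  obtain ⟨u, hu, hmin⟩ := (univ.filter (g · < 0)).exists_min_image (fun t => c t / -g t)
    (by simpa [Finset.Nonempty] using hg)
  rw [mem_filter] at hu
  set τ := c u / -g u
  have hτ : 0 ≤ τ := div_nonneg (hc u) (by linarith [hu.2])
  refine ⟨τ, u, hu.2, fun t => ?_, by
    simp only [τ, div_neg, neg_mul, div_mul_cancel₀ _ hu.2.ne, add_neg_cancel]⟩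
  simp only [Pi.zero_apply, Pi.add_apply, Pi.smul_apply, smul_eq_mul]
  by_cases ht : g t < 0
  · have := (le_div_iff₀ (by linarith)).mp (hmin t (mem_filter.mpr ⟨mem_univ t, ht⟩))
    linarith
  · exact add_nonneg (hc t) (mul_nonneg hτ (not_lt.mp ht))

abbrev vanishingOff (S : Finset ι) : Submodule ℝ (ι → ℝ) := Submodule.pi (↑S)ᶜ fun _ => ⊥

variable [AddCommGroup E] [Module ℝ E]

lemma exists_mem_vanishingOff_erase [DecidableEq ι] {L : (ι → ℝ) →ₗ[ℝ] E} {S : Finset ι}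
    {g c : ι → ℝ} (hgS : g ∈ vanishingOff S) (hgL : L g = 0) (hg : g ≠ 0) (hcS : c ∈ vanishingOff S)
    (hc : 0 ≤ c) : ∃ u ∈ S, ∃ c' ∈ vanishingOff (S.erase u), 0 ≤ c' ∧ L c' = L c := by
  obtain ⟨g, hgS, hgL, hneg⟩ : ∃ g ∈ vanishingOff S, L g = 0 ∧ ∃ t, g t < 0 := by
    obtain ⟨t, ht⟩ := Function.ne_iff.mp hg
    rcases ht.lt_or_gt with ht | ht
    · exact ⟨g, hgS, hgL, t, ht⟩
    · exact ⟨-g, neg_mem hgS, by simp [hgL], t, by simpa using ht⟩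
  obtain ⟨τ, u, hu, hnonneg, hzero⟩ := exists_nonneg_add_smul_eq_zero hc hneg
  simp only [Submodule.mem_pi, Submodule.mem_bot, Set.mem_compl_iff, mem_coe] at hgS hcS ⊢
  have huS : u ∈ S := by_contra fun h => hu.ne (hgS u h)
  refine ⟨u, huS, c + τ • g, fun t ht => ?_, hnonneg, by simp [hgL]⟩
  by_cases htu : t = u
  · subst htu; simpa using hzero
  · have htS : t ∉ S := fun h => ht (mem_erase.mpr ⟨htu, h⟩)
    simp [hcS t htS, hgS t htS]

variable [TopologicalSpace E] [IsTopologicalAddGroup E] [ContinuousSMul ℝ E] [T2Space E]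

lemma isClosed_image_inter_nonneg_of_ker_eq_bot {L : (ι → ℝ) →ₗ[ℝ] E}
    {V : Submodule ℝ (ι → ℝ)} (hL : LinearMap.ker (L ∘ₗ V.subtype) = ⊥) :
    IsClosed (L '' (V ∩ Set.Ici 0)) := by
  rw [← Subtype.image_preimage_coe, Set.image_image]
  exact (LinearMap.isClosedEmbedding_of_injective hL).isClosedMap _
    (isClosed_Ici.preimage continuous_subtype_val)

lemma isClosed_image_vanishingOff_inter_nonneg (L : (ι → ℝ) →ₗ[ℝ] E) (S : Finset ι) :
    IsClosed (L '' (vanishingOff S ∩ Set.Ici 0)) := by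
  classical
  induction S using Finset.strongInduction with
  | H S ih =>
  by_cases hL : LinearMap.ker (L ∘ₗ (vanishingOff S).subtype) = ⊥
  · exact isClosed_image_inter_nonneg_of_ker_eq_bot hL
  obtain ⟨⟨g, hgS⟩, hgL, hg⟩ := (Submodule.ne_bot_iff _).mp hL
  have hg : g ≠ 0 := fun h => hg (Subtype.ext h)
  have hunion : L '' (vanishingOff S ∩ Set.Ici 0) =
      ⋃ u ∈ S, L '' (vanishingOff (S.erase u) ∩ Set.Ici 0) := by
    apply subset_antisymm
    · rintro _ ⟨c, ⟨hcS, hc⟩, rfl⟩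
      obtain ⟨u, hu, c', hc'S, hc', hLc'⟩ := exists_mem_vanishingOff_erase hgS hgL hg hcS hc
      exact Set.mem_biUnion hu ⟨c', ⟨hc'S, hc'⟩, hLc'⟩
    · refine Set.iUnion₂_subset fun u _ => Set.image_mono (Set.inter_subset_inter_left _ ?_)
      exact fun c hc t ht => hc t fun h => ht (mem_of_mem_erase h)
  rw [hunion]
  exact isClosed_biUnion_finset fun u hu => ih _ (erase_ssubset hu)

theorem isClosed_image_nonneg (L : (ι → ℝ) →ₗ[ℝ] E) : IsClosed (L '' Set.Ici 0) := by
  simpa using isClosed_image_vanishingOff_inter_nonneg L univ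

end ConicImage

section Games

variable {ι κ : Type*} [Fintype ι] [Fintype κ]

theorem Matrix.exists_nonneg_mulVec_le_or_exists_nonneg_vecMul_nonneg
    (M : Matrix ι κ ℝ) (b : ι → ℝ) :
    (∃ y, 0 ≤ y ∧ M *ᵥ y ≤ b) ∨ ∃ x, 0 ≤ x ∧ 0 ≤ x ᵥ* M ∧ x ⬝ᵥ b < 0 := by
  classical
  let L : (ι ⊕ κ → ℝ) →ₗ[ℝ] ι → ℝ :=
    LinearMap.funLeft ℝ ℝ Sum.inl + M.mulVecLin ∘ₗ LinearMap.funLeft ℝ ℝ Sum.inr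
  have hL (s : ι → ℝ) (y : κ → ℝ) : L (Sum.elim s y) = s + M *ᵥ y := rfl
  by_cases hb : b ∈ L '' Set.Ici 0
  · obtain ⟨c, hc, rfl⟩ := hb
    exact .inl ⟨c ∘ Sum.inr, fun j => hc (.inr j), le_add_of_nonneg_left fun k => hc (.inl k)⟩
  let C : ProperCone ℝ (ι → ℝ) :=
    ⟨(PointedCone.positive ℝ _).map L, by simpa using isClosed_image_nonneg L⟩
  obtain ⟨f, hfC, hfb⟩ := C.hyperplane_separation_point (x₀ := b) (by simpa [C] using hb)
  have hfL {s : ι → ℝ} {y : κ → ℝ} (hs : 0 ≤ s) (hy : 0 ≤ y) : 0 ≤ f (s + M *ᵥ y) :=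
    hfC _ ⟨Sum.elim s y, fun t => t.rec hs hy, hL s y⟩
  let x : ι → ℝ := fun k => f (Pi.single k 1)
  have hf (z : ι → ℝ) : f z = x ⬝ᵥ z := by
    conv_lhs => rw [← (Pi.basisFun ℝ ι).sum_repr z]
    simp [x, dotProduct, mul_comm]
  refine .inr ⟨x, fun k => ?_, fun j => ?_, hf b ▸ hfb⟩
  · simpa using hfL (Pi.single_nonneg.mpr zero_le_one) le_rfl
  · have := hfL le_rfl (Pi.single_nonneg.mpr zero_le_one : 0 ≤ Pi.single j (1 : ℝ))
    rwa [zero_add, hf, dotProduct_mulVec, dotProduct_single_one] at this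

lemma dotProduct_le_of_mem_stdSimplex {x a : ι → ℝ} {v : ℝ} (hx : x ∈ stdSimplex ℝ ι)
    (ha : ∀ k, a k ≤ v) : x ⬝ᵥ a ≤ v := by
  calc x ⬝ᵥ a ≤ x ⬝ᵥ fun _ => v := dotProduct_le_dotProduct_of_nonneg_left ha hx.1
    _ = v := by simp [dotProduct, ← sum_mul, hx.2]

lemma le_dotProduct_of_mem_stdSimplex {x a : ι → ℝ} {v : ℝ} (hx : x ∈ stdSimplex ℝ ι)
    (ha : ∀ k, v ≤ a k) : v ≤ x ⬝ᵥ a := by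
  simpa using dotProduct_le_of_mem_stdSimplex hx (a := -a) (v := -v) fun k => by simpa using ha k

lemma inv_sum_smul_mem_stdSimplex {x : ι → ℝ} (hx : 0 ≤ x) (hsum : 0 < ∑ k, x k) :
    (∑ k, x k)⁻¹ • x ∈ stdSimplex ℝ ι :=
  ⟨fun k => mul_nonneg (inv_nonneg.mpr hsum.le) (hx k), by
    simp [← mul_sum, inv_mul_cancel₀ hsum.ne']⟩

lemma sub_const_mulVec {ι κ : Type*} [Fintype κ] (A : Matrix ι κ ℝ) (v : ℝ) (y : κ → ℝ) :
    (A - of fun _ _ => v) *ᵥ y = A *ᵥ y - fun _ => v * ∑ j, y j := by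
  ext k; simp [mulVec, dotProduct, mul_sum, sub_mul, sum_sub_distrib]

lemma vecMul_sub_const {ι κ : Type*} [Fintype ι] (A : Matrix ι κ ℝ) (v : ℝ) (x : ι → ℝ) :
    x ᵥ* (A - of fun _ _ => v) = x ᵥ* A - fun _ => v * ∑ k, x k := by
  ext j; simp [vecMul, dotProduct, mul_sum, mul_sub, sum_sub_distrib, mul_comm]

theorem mulVec_lt_of_eq_zero_of_unique [DecidableEq ι] (A : Matrix ι κ ℝ) (v : ℝ)
    {xs : ι → ℝ} {ys : κ → ℝ}
    (hxs : ∀ x ∈ stdSimplex ℝ ι, (∀ j, v ≤ (x ᵥ* A) j) → x = xs)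
    (hys : ∀ y ∈ stdSimplex ℝ κ, (∀ k, (A *ᵥ y) k ≤ v) → y = ys)
    {i : ι} (hi : xs i = 0) : (A *ᵥ ys) i < v := by
  set e : ι → ℝ := Pi.single i 1 with he
  rcases (A - of fun _ _ => v).exists_nonneg_mulVec_le_or_exists_nonneg_vecMul_nonneg (-e)
    with ⟨y, hy, hAy⟩ | ⟨x, hx, hxA, hxi⟩
  · set s := ∑ j, y j with hs_def
    have hrow (k : ι) : (A *ᵥ y) k ≤ v * s - e k := by
      have := hAy k
      simp only [sub_const_mulVec, Pi.sub_apply, Pi.neg_apply] at this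
      linarith
    have hs : 0 < s := by
      refine (sum_nonneg fun j _ => hy j).lt_of_ne fun h => ?_
      have hy0 : y = 0 :=
        funext fun j => (sum_eq_zero_iff_of_nonneg fun j _ => hy j).mp h.symm j (mem_univ j)
      have h0 := hrow i
      rw [hy0, hs_def, ← h, he] at h0
      norm_num at h0
    have hrow' (k : ι) : (A *ᵥ (s⁻¹ • y)) k ≤ v - s⁻¹ * e k := by
      calc (A *ᵥ (s⁻¹ • y)) k = s⁻¹ * (A *ᵥ y) k := by simp [mulVec_smul]
        _ ≤ s⁻¹ * (v * s - e k) := by gcongr; exact hrow k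
        _ = v - s⁻¹ * e k := by field_simp
    have he0 : 0 ≤ e := Pi.single_nonneg.mpr zero_le_one
    have hopt : s⁻¹ • y = ys := hys _ (inv_sum_smul_mem_stdSimplex hy hs) fun k =>
      (hrow' k).trans (sub_le_self _ (mul_nonneg (inv_nonneg.mpr hs.le) (he0 k)))
    rw [← hopt]
    refine (hrow' i).trans_lt ?_
    simpa [he] using hs
  · set s := ∑ k, x k
    have hxi : 0 < x i := by simpa [he] using hxi
    have hs : 0 < s := hxi.trans_le (single_le_sum (fun k _ => hx k) (mem_univ i))
    have hcol (j : κ) : v * s ≤ (x ᵥ* A) j := by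
      simpa [vecMul_sub_const] using hxA j
    have hopt : s⁻¹ • x = xs := hxs _ (inv_sum_smul_mem_stdSimplex hx hs) fun j => by
      rw [smul_vecMul, Pi.smul_apply, smul_eq_mul, le_inv_mul_iff₀ hs, mul_comm]
      exact hcol j
    have := congrFun hopt i
    simp only [Pi.smul_apply, smul_eq_mul, hi] at this
    exact absurd this (mul_pos (inv_pos.mpr hs) hxi).ne'

def IsSaddlePoint (A : Matrix ι κ ℝ) (x : ι → ℝ) (y : κ → ℝ) : Prop :=
  ∀ x' ∈ stdSimplex ℝ ι, ∀ y' ∈ stdSimplex ℝ κ,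
    x' ⬝ᵥ A *ᵥ y ≤ x ⬝ᵥ A *ᵥ y ∧ x ⬝ᵥ A *ᵥ y ≤ x ⬝ᵥ A *ᵥ y'

namespace IsSaddlePoint

variable {A : Matrix ι κ ℝ} {x xs : ι → ℝ} {y ys : κ → ℝ}

lemma mulVec_le [DecidableEq ι] (h : IsSaddlePoint A x y) (hy : y ∈ stdSimplex ℝ κ) (k : ι) :
    (A *ᵥ y) k ≤ x ⬝ᵥ A *ᵥ y := by
  simpa using (h _ (single_mem_stdSimplex ℝ k) y hy).1

lemma le_vecMul [DecidableEq κ] (h : IsSaddlePoint A x y) (hx : x ∈ stdSimplex ℝ ι) (j : κ) :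
    x ⬝ᵥ A *ᵥ y ≤ (x ᵥ* A) j := by
  simpa only [dotProduct_mulVec, dotProduct_single_one] using
    (h x hx _ (single_mem_stdSimplex ℝ j)).2

lemma of_mulVec_le_of_le_vecMul {v : ℝ} (hx : x ∈ stdSimplex ℝ ι) (hy : y ∈ stdSimplex ℝ κ)
    (hrow : ∀ k, (A *ᵥ y) k ≤ v) (hcol : ∀ j, v ≤ (x ᵥ* A) j) : IsSaddlePoint A x y := by
  have hge {y'} (hy' : y' ∈ stdSimplex ℝ κ) : v ≤ x ⬝ᵥ A *ᵥ y' := by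
    rw [dotProduct_mulVec, dotProduct_comm]
    exact le_dotProduct_of_mem_stdSimplex hy' hcol
  have hval : x ⬝ᵥ A *ᵥ y = v := (dotProduct_le_of_mem_stdSimplex hx hrow).antisymm (hge hy)
  intro x' hx' y' hy'
  rw [hval]
  exact ⟨dotProduct_le_of_mem_stdSimplex hx' hrow, hge hy'⟩

theorem mulVec_lt_of_unique [DecidableEq ι] [DecidableEq κ] (h : IsSaddlePoint A xs ys)
    (hxs : xs ∈ stdSimplex ℝ ι) (hys : ys ∈ stdSimplex ℝ κ)
    (huniq : ∀ x ∈ stdSimplex ℝ ι, ∀ y ∈ stdSimplex ℝ κ, IsSaddlePoint A x y → x = xs ∧ y = ys)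
    {i : ι} (hi : xs i = 0) : (A *ᵥ ys) i < xs ⬝ᵥ A *ᵥ ys := by
  refine mulVec_lt_of_eq_zero_of_unique A _ (fun x hx hxA => ?_) (fun y hy hAy => ?_) hi
  · exact (huniq x hx ys hys (of_mulVec_le_of_le_vecMul hx hys (h.mulVec_le hys) hxA)).1
  · exact (huniq xs hxs y hy (of_mulVec_le_of_le_vecMul hxs hy hAy (h.le_vecMul hxs))).2

end IsSaddlePoint

lemma isSaddlePoint_neg_transpose_iff {A : Matrix ι κ ℝ} {x : ι → ℝ} {y : κ → ℝ} :
    IsSaddlePoint (-Aᵀ) y x ↔ IsSaddlePoint A x y := by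
  have hval (x : ι → ℝ) (y : κ → ℝ) : y ⬝ᵥ (-Aᵀ) *ᵥ x = -(x ⬝ᵥ A *ᵥ y) := by
    simp [neg_mulVec, mulVec_transpose, dotProduct_mulVec, dotProduct_comm]
  simp only [IsSaddlePoint, hval, neg_le_neg_iff]
  exact ⟨fun h x' hx' y' hy' => (h y' hy' x' hx').symm,
    fun h y' hy' x' hx' => (h x' hx' y' hy').symm⟩

end Games

theorem stmt_7 (n m : ℕ) (A : Matrix (Fin n) (Fin m) ℝ)
    (xs : Fin n → ℝ) (ys : Fin m → ℝ)
    (hxs : (∀ i, 0 ≤ xs i) ∧ ∑ i, xs i = 1) (hys : (∀ j, 0 ≤ ys j) ∧ ∑ j, ys j = 1)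
    (hsaddle : ∀ x : Fin n → ℝ, (∀ i, 0 ≤ x i) → ∑ i, x i = 1 →
        ∀ y : Fin m → ℝ, (∀ j, 0 ≤ y j) → ∑ j, y j = 1 →
        x ⬝ᵥ A.mulVec ys ≤ xs ⬝ᵥ A.mulVec ys ∧ xs ⬝ᵥ A.mulVec ys ≤ xs ⬝ᵥ A.mulVec y)
    (huniq : ∀ x : Fin n → ℝ, (∀ i, 0 ≤ x i) → ∑ i, x i = 1 →
        ∀ y : Fin m → ℝ, (∀ j, 0 ≤ y j) → ∑ j, y j = 1 →
        (∀ x' : Fin n → ℝ, (∀ i, 0 ≤ x' i) → ∑ i, x' i = 1 →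
         ∀ y' : Fin m → ℝ, (∀ j, 0 ≤ y' j) → ∑ j, y' j = 1 →
         x' ⬝ᵥ A.mulVec y ≤ x ⬝ᵥ A.mulVec y ∧ x ⬝ᵥ A.mulVec y ≤ x ⬝ᵥ A.mulVec y') →
        x = xs ∧ y = ys) :
    (∀ i, xs i = 0 → A.mulVec ys i < xs ⬝ᵥ A.mulVec ys) ∧
    (∀ j, ys j = 0 → xs ⬝ᵥ A.mulVec ys < A.transpose.mulVec xs j) := by
  have hsad : IsSaddlePoint A xs ys := fun x hx y hy => hsaddle x hx.1 hx.2 y hy.1 hy.2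
  have huniq' : ∀ x ∈ stdSimplex ℝ (Fin n), ∀ y ∈ stdSimplex ℝ (Fin m),
      IsSaddlePoint A x y → x = xs ∧ y = ys := fun x hx y hy h =>
    huniq x hx.1 hx.2 y hy.1 hy.2 fun x' h₀ h₁ y' h₀' h₁' => h x' ⟨h₀, h₁⟩ y' ⟨h₀', h₁'⟩
  refine ⟨fun i hi => hsad.mulVec_lt_of_unique hxs hys huniq' hi, fun j hj => ?_⟩
  have := (isSaddlePoint_neg_transpose_iff.mpr hsad).mulVec_lt_of_unique hys hxs
    (fun y hy x hx h => (huniq' x hx y hy (isSaddlePoint_neg_transpose_iff.mp h)).symm) hj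
  simpa [neg_mulVec, mulVec_transpose, dotProduct_mulVec, dotProduct_comm] using this
end

section
/- Let x ∈ Δₙ be strictly positive, c ∈ ℝⁿ with |cᵢ| ≤ η for all i and some 0 < η < 1/2. Define x'ᵢ = xᵢ e^{cᵢ}/∑ⱼ xⱼe^{cⱼ} and x''ᵢ = xᵢ(1+cᵢ)/∑ⱼ xⱼ(1+cⱼ). Then ‖x' - x‖₁ ≤ C·η and ‖x'' - x‖₁ ≤ C·η and ‖x' - x''‖₁ ≤ C·η² for some absolute constant C. -/
/-!
All three vectors are reweightings `xᵢ gᵢ / ∑ⱼ xⱼ gⱼ` of `x`, with `g = 1`, `g = 1 + c` and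
`g = exp c`. Two reweightings by `f` and `g ≥ 0` with `|fᵢ - gᵢ| ≤ ε` are `2ε / ∑ⱼ xⱼ fⱼ`-close
in `ℓ¹`, because `fᵢ T - gᵢ S = (fᵢ - gᵢ) T + gᵢ (T - S)` and `|T - S| ≤ ε` for the two
normalisers. The theorem follows from `|eᶜ - 1| ≤ 2|c|` and `|eᶜ - 1 - c| ≤ c²` for `|c| ≤ 1`.
-/

open Finset Real

variable {ι : Type*} [Fintype ι]

noncomputable def reweight (x f : ι → ℝ) (i : ι) : ℝ := x i * f i / ∑ j, x j * f j

lemma reweight_one {x : ι → ℝ} (hx : ∑ i, x i = 1) : reweight x 1 = x := by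
  ext i; simp [reweight, hx]

lemma abs_sum_mul_sub_sum_mul_le {x f g : ι → ℝ} {ε : ℝ} (hx : ∀ i, 0 ≤ x i)
    (hfg : ∀ i, |f i - g i| ≤ ε) : |∑ i, x i * f i - ∑ i, x i * g i| ≤ ε * ∑ i, x i := by
  rw [← sum_sub_distrib, mul_sum]
  refine (abs_sum_le_sum_abs _ _).trans (sum_le_sum fun i _ => ?_)
  rw [← mul_sub, abs_mul, abs_of_nonneg (hx i), mul_comm ε]
  exact mul_le_mul_of_nonneg_left (hfg i) (hx i)

theorem sum_abs_reweight_sub_reweight_le {x f g : ι → ℝ} {ε : ℝ} (hx : ∀ i, 0 ≤ x i)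
    (hg : ∀ i, 0 ≤ g i) (hfg : ∀ i, |f i - g i| ≤ ε)
    (hS : 0 < ∑ i, x i * f i) (hT : 0 < ∑ i, x i * g i) :
    ∑ i, |reweight x f i - reweight x g i| ≤ 2 * ε * (∑ i, x i) / ∑ i, x i * f i := by
  set S := ∑ i, x i * f i
  set T := ∑ i, x i * g i
  have hTS : |T - S| ≤ ε * ∑ i, x i := by
    rw [abs_sub_comm]; exact abs_sum_mul_sub_sum_mul_le hx hfg
  have hcross (i : ι) : |f i * T - g i * S| ≤ ε * T + g i * (ε * ∑ j, x j) := calc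
    |f i * T - g i * S| = |(f i - g i) * T + g i * (T - S)| := by congr 1; ring
    _ ≤ |f i - g i| * T + g i * |T - S| := by
        refine (abs_add_le _ _).trans_eq ?_
        rw [abs_mul, abs_mul, abs_of_pos hT, abs_of_nonneg (hg i)]
    _ ≤ ε * T + g i * (ε * ∑ j, x j) := by
        gcongr
        · exact hfg i
        · exact hg i
  calc ∑ i, |reweight x f i - reweight x g i|
      = ∑ i, x i * |f i * T - g i * S| / (S * T) := by
        refine sum_congr rfl fun i _ => ?_
        have hdiff : x i * f i / S - x i * g i / T = x i * (f i * T - g i * S) / (S * T) := by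
          field_simp
        rw [reweight, reweight, hdiff, abs_div, abs_mul, abs_of_nonneg (hx i),
          abs_of_pos (mul_pos hS hT)]
    _ ≤ ∑ i, x i * (ε * T + g i * (ε * ∑ j, x j)) / (S * T) := by
        gcongr with i
        · exact hx i
        · exact hcross i
    _ = 2 * ε * (∑ i, x i) / S := by
        have hsplit (i : ι) : x i * (ε * T + g i * (ε * ∑ j, x j))
            = ε * T * x i + ε * (∑ j, x j) * (x i * g i) := by ring
        simp only [← sum_div, hsplit, sum_add_distrib, ← mul_sum]
        field_simp
        ring

lemma sum_abs_reweight_sub_le {x g : ι → ℝ} {ε : ℝ} (hx : ∀ i, 0 ≤ x i) (hx1 : ∑ i, x i = 1)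
    (hg : ∀ i, 0 ≤ g i) (hg1 : ∀ i, |1 - g i| ≤ ε) (hT : 0 < ∑ i, x i * g i) :
    ∑ i, |reweight x g i - x i| ≤ 2 * ε := by
  have h := sum_abs_reweight_sub_reweight_le (f := 1) hx hg hg1 (by simp [hx1]) hT
  simp only [reweight_one hx1, Pi.one_apply, mul_one, hx1, div_one] at h
  simpa only [abs_sub_comm] using h

theorem stmt_12 : ∃ C : ℝ, 0 < C ∧
    ∀ (n : ℕ) (x c : Fin n → ℝ) (η : ℝ), 0 < η → η < 1/2 →
    (∀ i, 0 < x i) → (∑ i, x i = 1) → (∀ i, |c i| ≤ η) →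
    ∀ (x' x'' : Fin n → ℝ),
    (∀ i, x' i = x i * Real.exp (c i) / ∑ j, x j * Real.exp (c j)) →
    (∀ i, x'' i = x i * (1 + c i) / ∑ j, x j * (1 + c j)) →
    (∑ i, |x' i - x i|) ≤ C * η ∧ (∑ i, |x'' i - x i|) ≤ C * η ∧
    (∑ i, |x' i - x'' i|) ≤ C * η ^ 2 := by
  refine ⟨4, by norm_num, fun n x c η hη hη2 hx hsum hc x' x'' hx' hx'' => ?_⟩
  have hx0 i : 0 ≤ x i := (hx i).le
  have hc1 i : |c i| ≤ 1 := (hc i).trans (by linarith)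
  have hlin_nonneg i : 0 ≤ 1 + c i := by linarith [neg_abs_le (c i), hc1 i]
  have hlin_sum : 1 / 2 ≤ ∑ i, x i * (1 + c i) := by
    have h := abs_sum_mul_sub_sum_mul_le (f := fun i => 1 + c i) (g := 1) hx0 (ε := η)
      (by simpa using hc)
    simp only [Pi.one_apply, mul_one, hsum] at h
    linarith [(abs_le.1 h).1]
  have hexp_sum : ∑ i, x i * (1 + c i) ≤ ∑ i, x i * exp (c i) :=
    sum_le_sum fun i _ => mul_le_mul_of_nonneg_left (by linarith [add_one_le_exp (c i)]) (hx0 i)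
  have hquad i : |1 + c i - exp (c i)| ≤ η ^ 2 := by
    rw [abs_sub_comm, show exp (c i) - (1 + c i) = exp (c i) - 1 - c i by ring]
    exact (abs_exp_sub_one_sub_id_le (hc1 i)).trans (sq_le_sq.mpr ((hc i).trans (le_abs_self η)))
  obtain rfl : x' = reweight x (fun i => exp (c i)) := funext hx'
  obtain rfl : x'' = reweight x (fun i => 1 + c i) := funext hx''
  refine ⟨?_, ?_, ?_⟩
  · refine (sum_abs_reweight_sub_le hx0 hsum (fun i => (exp_pos _).le) (ε := 2 * η) (fun i => ?_)
      (by linarith)).trans (by linarith)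
    rw [abs_sub_comm]
    exact (abs_exp_sub_one_le (hc1 i)).trans (by linarith [hc i])
  · refine (sum_abs_reweight_sub_le hx0 hsum hlin_nonneg (ε := η) (by simpa using hc)
      (by linarith)).trans (by linarith)
  · simp only [abs_sub_comm (reweight x (fun i => exp (c i)) _)]
    refine (sum_abs_reweight_sub_reweight_le hx0 (fun i => (exp_pos _).le) hquad (by linarith)
      (by linarith)).trans ?_
    rw [hsum, div_le_iff₀ (by linarith)]
    nlinarith [sq_nonneg η]
end

section
/- Let B be a k₁×k₂ real matrix, Dₓ a k₁×k₁ diagonal matrix with positive diagonal, D_y a k₂×k₂ diagonal matrix with positive diagonal, and η > 0. Then every eigenvalue of the block matrix J_small = [[0, ηDₓB],[-ηD_yBᵀ, 0]] is purely imaginary. -/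
/-! Writing `d = Sum.elim dx dy`, the matrix factors as `J = diag(d) * S` with
`S = fromBlocks 0 (η • B) (-(η • B)ᵀ) 0` real skew-symmetric. If `J v = λ v` then
`S v = λ diag(d)⁻¹ v`, so `v* S v = λ (v* diag(d)⁻¹ v)`. The left side is purely imaginary
because `S` is skew-Hermitian over `ℂ`, and `v* diag(d)⁻¹ v` is a positive real, hence `re λ = 0`. -/

open Matrix ComplexOrder

theorem Matrix.re_star_dotProduct_mulVec_self_of_conjTranspose_eq_neg {n 𝕜 : Type*} [Fintype n]
    [RCLike 𝕜] {A : Matrix n n 𝕜} (hA : Aᴴ = -A) (x : n → 𝕜) :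
    RCLike.re (star x ⬝ᵥ A *ᵥ x) = 0 := by
  have hconj : star (star x ⬝ᵥ A *ᵥ x) = -(star x ⬝ᵥ A *ᵥ x) := by
    rw [← star_dotProduct_star, star_star, star_mulVec, hA, ← dotProduct_mulVec, neg_mulVec,
      dotProduct_neg]
  have hre := congrArg RCLike.re hconj
  simp only [RCLike.star_def, RCLike.conj_re, map_neg] at hre
  linarith

theorem Matrix.conjTranspose_map_ofReal_eq_neg {n : Type*} {S : Matrix n n ℝ} (hS : Sᵀ = -S) :
    (S.map Complex.ofReal)ᴴ = -S.map Complex.ofReal := by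
  rw [← conjTranspose_map _ fun _ ↦ (Complex.conj_ofReal _).symm,
    conjTranspose_eq_transpose_of_trivial, hS, Matrix.map_neg]
  simp

theorem re_eq_zero_of_diagonal_mul_mulVec_eq_smul {n : Type*} [Fintype n] [DecidableEq n]
    {d : n → ℝ} (hd : ∀ i, 0 < d i) {S : Matrix n n ℝ} (hS : Sᵀ = -S) {lam : ℂ} {v : n → ℂ}
    (hv : v ≠ 0) (heig : (diagonal d * S).map Complex.ofReal *ᵥ v = lam • v) : lam.re = 0 := by
  set D : Matrix n n ℂ := diagonal fun i ↦ (d i : ℂ)⁻¹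
  have hD : D.PosDef := PosDef.diagonal fun i ↦ by simpa using hd i
  have hSv : S.map Complex.ofReal *ᵥ v = lam • D *ᵥ v := by
    have hDS : D * (diagonal d * S).map Complex.ofReal = S.map Complex.ofReal := by
      ext i j
      simp [D, diagonal_mul, (hd i).ne']
    rw [← hDS, ← mulVec_mulVec, heig, mulVec_smul]
  have hre : (lam * (star v ⬝ᵥ D *ᵥ v)).re = 0 := by
    simpa [hSv] using
      re_star_dotProduct_mulVec_self_of_conjTranspose_eq_neg (conjTranspose_map_ofReal_eq_neg hS) v
  obtain ⟨hpos_re, hpos_im⟩ := Complex.pos_iff.mp (hD.dotProduct_mulVec_pos hv)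
  rw [Complex.mul_re, ← hpos_im, mul_zero, sub_zero] at hre
  exact (mul_eq_zero.mp hre).resolve_right hpos_re.ne'

theorem Matrix.fromBlocks_zero_diagonal_mul {l m α : Type*} [Fintype l] [Fintype m]
    [DecidableEq l] [DecidableEq m] [Semiring α] (dl : l → α) (dm : m → α) (B : Matrix l m α)
    (C : Matrix m l α) :
    fromBlocks 0 (diagonal dl * B) (diagonal dm * C) 0 =
      diagonal (Sum.elim dl dm) * fromBlocks 0 B C 0 := by
  rw [← fromBlocks_diagonal, fromBlocks_multiply]
  simp

theorem Matrix.transpose_fromBlocks_zero_neg_transpose {m n α : Type*} [AddGroup α]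
    (B : Matrix m n α) : (fromBlocks 0 B (-Bᵀ) 0)ᵀ = -fromBlocks 0 B (-Bᵀ) 0 := by
  simp [fromBlocks_transpose, fromBlocks_neg]

theorem stmt_14_general (k₁ k₂ : ℕ) (B : Matrix (Fin k₁) (Fin k₂) ℝ)
    (dx : Fin k₁ → ℝ) (hdx : ∀ i, 0 < dx i)
    (dy : Fin k₂ → ℝ) (hdy : ∀ j, 0 < dy j)
    (η : ℝ)
    (Jsmall : Matrix (Fin k₁ ⊕ Fin k₂) (Fin k₁ ⊕ Fin k₂) ℝ)
    (hJ : Jsmall = Matrix.fromBlocks 0 (η • (Matrix.diagonal dx * B))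
        (-(η • (Matrix.diagonal dy * B.transpose))) 0)
    (lam : ℂ) (v : Fin k₁ ⊕ Fin k₂ → ℂ) (hv : v ≠ 0)
    (heig : (Jsmall.map Complex.ofReal).mulVec v = lam • v) :
    lam.re = 0 := by
  have hfactor : Jsmall = diagonal (Sum.elim dx dy) * fromBlocks 0 (η • B) (-(η • B)ᵀ) 0 := by
    rw [hJ, ← fromBlocks_zero_diagonal_mul, transpose_smul, Matrix.mul_neg, Matrix.mul_smul,
      Matrix.mul_smul]
  have hd : ∀ i, 0 < Sum.elim dx dy i := by
    rintro (i | j)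
    exacts [hdx i, hdy j]
  rw [hfactor] at heig
  exact re_eq_zero_of_diagonal_mul_mulVec_eq_smul hd
    (transpose_fromBlocks_zero_neg_transpose _) hv heig

theorem stmt_14 (k₁ k₂ : ℕ) (B : Matrix (Fin k₁) (Fin k₂) ℝ)
    (dx : Fin k₁ → ℝ) (hdx : ∀ i, 0 < dx i)
    (dy : Fin k₂ → ℝ) (hdy : ∀ j, 0 < dy j)
    (η : ℝ) (hη : 0 < η)
    (Jsmall : Matrix (Fin k₁ ⊕ Fin k₂) (Fin k₁ ⊕ Fin k₂) ℝ)
    (hJ : Jsmall = Matrix.fromBlocks 0 (η • (Matrix.diagonal dx * B))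
        (-(η • (Matrix.diagonal dy * B.transpose))) 0)
    (lam : ℂ) (v : Fin k₁ ⊕ Fin k₂ → ℂ) (hv : v ≠ 0)
    (heig : (Jsmall.map Complex.ofReal).mulVec v = lam • v) :
    lam.re = 0 :=
  stmt_14_general k₁ k₂ B dx hdx dy hdy η Jsmall hJ lam v hv heig
end

section
/- Let p, b ∈ ℝⁿ with p a strictly positive probability vector and all |bᵢ| ≤ 1/2. If ∑ᵢ pᵢ (∑ⱼ pⱼbⱼ - bᵢ)² ≥ ε² for some ε > 0, then defining p'ᵢ = pᵢ(1+bᵢ)/∑ⱼpⱼ(1+bⱼ), one has ∑ᵢ p'ᵢ bᵢ ≥ ∑ᵢ pᵢ bᵢ + (2/3)·ε². -/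
/-!
Reweighting `p` by `1 + b` raises the `p`-mean `μ` of `b` by exactly `Var_p(b) / (1 + μ)`,
and `1 + μ ≤ 3/2` because `|b| ≤ 1/2`.
-/

open Finset

variable {ι : Type*} [Fintype ι] {p b : ι → ℝ}

theorem sum_mul_sub_sq_eq_sum_mul_sq_sub_sq (hp1 : ∑ i, p i = 1) :
    ∑ i, p i * ((∑ j, p j * b j) - b i) ^ 2 = ∑ i, p i * b i ^ 2 - (∑ i, p i * b i) ^ 2 := by
  set μ := ∑ i, p i * b i
  have hexpand : ∀ i, p i * (μ - b i) ^ 2 = μ ^ 2 * p i - 2 * μ * (p i * b i) + p i * b i ^ 2 :=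
    fun i => by ring
  simp only [hexpand, sum_add_distrib, sum_sub_distrib, ← mul_sum, hp1]
  ring

theorem abs_sum_mul_le_of_abs_le {c : ℝ} (hp0 : ∀ i, 0 ≤ p i) (hp1 : ∑ i, p i = 1)
    (hb : ∀ i, |b i| ≤ c) : |∑ i, p i * b i| ≤ c :=
  calc |∑ i, p i * b i| ≤ ∑ i, p i * c := by
        refine (abs_sum_le_sum_abs _ _).trans (sum_le_sum fun i _ => ?_)
        rw [abs_mul, abs_of_nonneg (hp0 i)]
        exact mul_le_mul_of_nonneg_left (hb i) (hp0 i)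
    _ = c := by rw [← sum_mul, hp1, one_mul]

theorem sum_reweight_mul_sub_sum_mul (hp1 : ∑ i, p i = 1) (hμ : 1 + ∑ i, p i * b i ≠ 0) :
    ∑ i, p i * (1 + b i) / (∑ j, p j * (1 + b j)) * b i - ∑ i, p i * b i
      = (∑ i, p i * ((∑ j, p j * b j) - b i) ^ 2) / (1 + ∑ i, p i * b i) := by
  have hZ : ∑ j, p j * (1 + b j) = 1 + ∑ i, p i * b i := by
    simp only [mul_add, mul_one, sum_add_distrib, hp1]
  have hsplit : ∀ i, p i * (1 + b i) / (1 + ∑ j, p j * b j) * b i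
      = (p i * b i + p i * b i ^ 2) / (1 + ∑ j, p j * b j) := fun i => by ring
  rw [sum_mul_sub_sq_eq_sum_mul_sq_sub_sq hp1, hZ]
  simp only [hsplit, ← sum_div, sum_add_distrib]
  field_simp
  ring

theorem stmt_17_general (n : ℕ) (p b : Fin n → ℝ) (hp0 : ∀ i, 0 < p i) (hp1 : ∑ i, p i = 1)
    (hb : ∀ i, |b i| ≤ 1/2) (ε : ℝ)
    (hvar : ε ^ 2 ≤ ∑ i, p i * ((∑ j, p j * b j) - b i) ^ 2)
    (p' : Fin n → ℝ) (hp' : ∀ i, p' i = p i * (1 + b i) / ∑ j, p j * (1 + b j)) :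
    ∑ i, p i * b i + (2/3) * ε ^ 2 ≤ ∑ i, p' i * b i := by
  obtain ⟨hμ_lo, hμ_hi⟩ := abs_le.mp (abs_sum_mul_le_of_abs_le (fun i => (hp0 i).le) hp1 hb)
  have hgain := sum_reweight_mul_sub_sum_mul hp1 (b := b) (by linarith)
  simp only [← hp'] at hgain
  set V := ∑ i, p i * ((∑ j, p j * b j) - b i) ^ 2
  have hV : (2/3) * V ≤ V / (1 + ∑ i, p i * b i) := by
    rw [le_div_iff₀ (by linarith)]
    nlinarith [sq_nonneg ε]
  linarith

theorem stmt_17 (n : ℕ) (p b : Fin n → ℝ) (hp0 : ∀ i, 0 < p i) (hp1 : ∑ i, p i = 1)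
    (hb : ∀ i, |b i| ≤ 1/2) (ε : ℝ) (hε : 0 < ε)
    (hvar : ε ^ 2 ≤ ∑ i, p i * ((∑ j, p j * b j) - b i) ^ 2)
    (p' : Fin n → ℝ) (hp' : ∀ i, p' i = p i * (1 + b i) / ∑ j, p j * (1 + b j)) :
    ∑ i, p i * b i + (2/3) * ε ^ 2 ≤ ∑ i, p' i * b i :=
  stmt_17_general n p b hp0 hp1 hb ε hvar p' hp'
end
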